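/- arXiv:2402.14267 — 9 statements merged into one kernel-verified Lean document; each statement's English description precedes it below -/
import Mathlib

section
/- Let ψ : EuclideanSpace ℝ (Fin n) → ℝ be twice continuously differentiable with gradient ∇ψ and Hessian H(η) (the derivative of ∇ψ, a continuous linear map on E), and let F(η) := ψ(η_q) − ψ(η) − ⟪∇ψ(η), η_q − η⟫ be the Bregman divergence to a fixed target η_q. Then for every η one has ∇F(η) = H(η)(η − η_q). Consequently, if H(η) is invertible for all η, a differentiable curve η : ℝ → E satisfies Newton's law η̇(t) = −λ(η(t) − η_q) if and only if it satisfies η̇(t) = −λ · H(η(t))⁻¹ (∇F(η(t))); i.e., Newton's law of cooling is the gradient flow of the Bregman divergence with respect to the Hessian metric of ψ. -/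
/-! The derivative of `η ↦ -ψ η - ⟪∇ψ η, ηq - η⟫` in direction `v` is
`-⟪∇ψ η, v⟫ - ⟪H v, ηq - η⟫ + ⟪∇ψ η, v⟫ = ⟪H v, η - ηq⟫`, and the symmetry of the Hessian turns
this into `⟪H (η - ηq), v⟫`. Hence `H⁻¹ ∇F(η) = η - ηq`, so both flows have the same velocity
field. -/

open scoped RealInnerProductSpace
open InnerProductSpace

section Bregman

variable {E : Type*} [NormedAddCommGroup E] [InnerProductSpace ℝ E] [CompleteSpace E]

noncomputable def bregmanDiv (ψ : E → ℝ) (q x : E) : ℝ :=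
  ψ q - ψ x - ⟪gradient ψ x, q - x⟫

theorem inner_fderiv_gradient_apply (ψ : E → ℝ) (x v w : E) :
    ⟪fderiv ℝ (gradient ψ) x v, w⟫ = fderiv ℝ (fderiv ℝ ψ) x v w := by
  have hgrad : gradient ψ = (toDual ℝ E).symm ∘ fderiv ℝ ψ := rfl
  rw [hgrad, LinearIsometryEquiv.comp_fderiv]
  exact toDual_symm_apply

theorem ContDiffAt.inner_fderiv_gradient_comm {ψ : E → ℝ} {x : E} (hψ : ContDiffAt ℝ 2 ψ x)
    (v w : E) :
    ⟪fderiv ℝ (gradient ψ) x v, w⟫ = ⟪fderiv ℝ (gradient ψ) x w, v⟫ := by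
  rw [inner_fderiv_gradient_apply, inner_fderiv_gradient_apply]
  exact hψ.isSymmSndFDerivAt (by simp [minSmoothness_of_isRCLikeNormedField]) v w

theorem ContDiffAt.differentiableAt_gradient {ψ : E → ℝ} {x : E} (hψ : ContDiffAt ℝ 2 ψ x) :
    DifferentiableAt ℝ (gradient ψ) x :=
  (toDual ℝ E).symm.differentiableAt.comp x
    ((hψ.fderiv_right (m := 1) (by norm_num)).differentiableAt one_ne_zero)

theorem ContDiffAt.hasGradientAt_bregmanDiv {ψ : E → ℝ} {x : E} (hψ : ContDiffAt ℝ 2 ψ x)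
    (q : E) :
    HasGradientAt (bregmanDiv ψ q) (fderiv ℝ (gradient ψ) x (x - q)) x := by
  have hderiv := ((hasFDerivAt_const (ψ q) x).sub
    (hψ.differentiableAt (by norm_num)).hasFDerivAt).sub
    (hψ.differentiableAt_gradient.hasFDerivAt.inner ℝ ((hasFDerivAt_id x).const_sub q))
  refine hasGradientAt_iff_hasFDerivAt.mpr (hderiv.congr_fderiv ?_)
  ext v
  simp only [toDual_apply_apply, FunLike.coe_sub, Pi.sub_apply,
    ContinuousLinearMap.coe_comp, Function.comp_apply, ContinuousLinearMap.prod_apply,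
    fderivInnerCLM_apply, zero_apply, neg_apply, ContinuousLinearMap.coe_id', id_eq,
    ← inner_gradient_left, inner_neg_right,
    hψ.inner_fderiv_gradient_comm (x - q) v, inner_sub_right]
  ring

end Bregman

theorem newton_law_is_gradient_flow_general
    (n : ℕ) (ψ : EuclideanSpace ℝ (Fin n) → ℝ) (hψ : ContDiff ℝ 2 ψ)
    (ηq : EuclideanSpace ℝ (Fin n)) (lam : ℝ)
    (H : EuclideanSpace ℝ (Fin n) →
      EuclideanSpace ℝ (Fin n) →L[ℝ] EuclideanSpace ℝ (Fin n))
    (hH : ∀ η, H η = fderiv ℝ (gradient ψ) η)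
    (F : EuclideanSpace ℝ (Fin n) → ℝ)
    (hF : ∀ η, F η = ψ ηq - ψ η - ⟪gradient ψ η, ηq - η⟫) :
    (∀ η, gradient F η = H η (η - ηq)) ∧
    (∀ Hinv : EuclideanSpace ℝ (Fin n) →
        EuclideanSpace ℝ (Fin n) →L[ℝ] EuclideanSpace ℝ (Fin n),
      (∀ η, (Hinv η).comp (H η) = ContinuousLinearMap.id ℝ _ ∧
            (H η).comp (Hinv η) = ContinuousLinearMap.id ℝ _) →
      ∀ η : ℝ → EuclideanSpace ℝ (Fin n), Differentiable ℝ η →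
        ((∀ t, deriv η t = (-lam) • (η t - ηq)) ↔
          (∀ t, deriv η t = (-lam) • Hinv (η t) (gradient F (η t))))) := by
  have hFeq : F = bregmanDiv ψ ηq := funext hF
  have hgradF : ∀ η, gradient F η = H η (η - ηq) := fun η ↦ by
    rw [hFeq, hH]
    exact hψ.contDiffAt.hasGradientAt_bregmanDiv ηq |>.gradient
  refine ⟨hgradF, fun Hinv hInv η _ ↦ ?_⟩
  have hvelocity : ∀ x, Hinv x (gradient F x) = x - ηq := fun x ↦ by
    rw [hgradF, ← ContinuousLinearMap.comp_apply, (hInv x).1, ContinuousLinearMap.id_apply]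
  simp only [hvelocity]

/-- **Newton's Law of Cooling as a gradient flow.**
For the Bregman divergence `F` to a fixed target `ηq`, induced by a `C²` potential `ψ`,
one has `∇F(η) = H(η)(η − ηq)` where `H` is the Hessian of `ψ`; consequently, when the
Hessian is invertible everywhere, a differentiable curve satisfies Newton's law
`η̇ = −λ(η − ηq)` iff it is the gradient flow `η̇ = −λ H⁻¹(∇F)` of the Bregman
divergence with respect to the Hessian metric. -/
theorem newton_law_is_gradient_flow
    (n : ℕ) (ψ : EuclideanSpace ℝ (Fin n) → ℝ) (hψ : ContDiff ℝ 2 ψ)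
    (ηq : EuclideanSpace ℝ (Fin n)) (lam : ℝ) (hlam : 0 < lam)
    (H : EuclideanSpace ℝ (Fin n) →
      EuclideanSpace ℝ (Fin n) →L[ℝ] EuclideanSpace ℝ (Fin n))
    (hH : ∀ η, H η = fderiv ℝ (gradient ψ) η)
    (F : EuclideanSpace ℝ (Fin n) → ℝ)
    (hF : ∀ η, F η = ψ ηq - ψ η - ⟪gradient ψ η, ηq - η⟫) :
    (∀ η, gradient F η = H η (η - ηq)) ∧
    (∀ Hinv : EuclideanSpace ℝ (Fin n) →
        EuclideanSpace ℝ (Fin n) →L[ℝ] EuclideanSpace ℝ (Fin n),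
      (∀ η, (Hinv η).comp (H η) = ContinuousLinearMap.id ℝ _ ∧
            (H η).comp (Hinv η) = ContinuousLinearMap.id ℝ _) →
      ∀ η : ℝ → EuclideanSpace ℝ (Fin n), Differentiable ℝ η →
        ((∀ t, deriv η t = (-lam) • (η t - ηq)) ↔
          (∀ t, deriv η t = (-lam) • Hinv (η t) (gradient F (η t))))) :=
  newton_law_is_gradient_flow_general n ψ hψ ηq lam H hH F hF
end

section
/- Let ψ : E → ℝ be three times continuously differentiable and let η : ℝ → E satisfy Newton's law η̇(t) = −λ(η(t) − η_q). Then t ↦ F(η(t)) is twice differentiable and λ · d²/dt² F(η(t)) = − D³ψ(η(t))[η̇(t), η̇(t), η̇(t)] + 2λ ⟪η̇(t), H(η(t)) η̇(t)⟫, where D³ψ denotes the third Fréchet derivative of ψ (whose negative is the Amari–Chentsov tensor in affine coordinates). -/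
/-!
Since `∇ψ` is the Riesz representative of `Dψ`, differentiating the Bregman divergence
`F(η) = ψ(η_q) − ψ(η) − ⟪∇ψ(η), η_q − η⟫` along any curve cancels the `ψ`-terms and leaves
`d/dt F(η) = ⟪H(η) η̇, η − η_q⟫`. Differentiating once more gives
`D³ψ(η)[η̇, η̇, η − η_q] + ⟪H(η) η̈, η − η_q⟫ + ⟪H(η) η̇, η̇⟫`, and Newton's law turns
`λ (η − η_q)` into `−η̇` and `η̈` into `−λ η̇`.
-/

open scoped RealInnerProductSpace
open InnerProductSpace

section Bregman

variable {E : Type*} [NormedAddCommGroup E] [InnerProductSpace ℝ E] [CompleteSpace E]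

theorem ContDiff.gradient {ψ : E → ℝ} {n : WithTop ℕ∞} (hψ : ContDiff ℝ (n + 1) ψ) :
    ContDiff ℝ n (gradient ψ) :=
  (toDual ℝ E).symm.toContinuousLinearEquiv.contDiff.comp (hψ.fderiv_right le_rfl)

theorem iteratedFDeriv_three_apply_eq_inner (ψ : E → ℝ) (x a b c : E) :
    iteratedFDeriv ℝ 3 ψ x ![a, b, c] = ⟪fderiv ℝ (fderiv ℝ (gradient ψ)) x a b, c⟫ := by
  set T : E ≃L[ℝ] StrongDual ℝ E := (toDual ℝ E).toContinuousLinearEquiv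
  have hT : fderiv ℝ (fderiv ℝ ψ) = fun y => (T : E →L[ℝ] StrongDual ℝ E).comp
      (fderiv ℝ (gradient ψ) y) := by
    have hfderiv : fderiv ℝ ψ = T ∘ gradient ψ := toDual_comp_gradient.symm
    ext y : 1
    rw [hfderiv, T.comp_fderiv]
  rw [iteratedFDeriv_succ_apply_right, iteratedFDeriv_two_apply, hT,
    fderiv_continuousLinearEquiv_comp]
  simp [T, Fin.init]

theorem HasDerivAt.bregmanDiv_comp {ψ : E → ℝ} (hψ : ContDiff ℝ 2 ψ) (q : E) {γ : ℝ → E}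
    {v : E} {t : ℝ} (hγ : HasDerivAt γ v t) :
    HasDerivAt (fun s => bregmanDiv ψ q (γ s)) ⟪fderiv ℝ (gradient ψ) (γ t) v, γ t - q⟫ t := by
  have hψγ : HasDerivAt (fun s => ψ (γ s)) ⟪gradient ψ (γ t), v⟫ t :=
    (hψ.differentiable (by norm_num) _).hasGradientAt.hasFDerivAt.comp_hasDerivAt t hγ
  have hgradγ := (((hψ.gradient (n := 1)).differentiable one_ne_zero _).hasFDerivAt
    |>.comp_hasDerivAt t hγ).inner ℝ (hγ.const_sub q)
  refine (((hasDerivAt_const t (ψ q)).sub hψγ).sub hgradγ).congr_deriv ?_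
  rw [← neg_sub (γ t) q]
  simp only [Function.comp_apply, inner_neg_right]
  ring

theorem hasDerivAt_deriv_bregmanDiv_comp {ψ : E → ℝ} (hψ : ContDiff ℝ 3 ψ) (q : E)
    {γ : ℝ → E} (hγ : Differentiable ℝ γ) {a : E} {t : ℝ} (hγ' : HasDerivAt (deriv γ) a t) :
    HasDerivAt (deriv fun s => bregmanDiv ψ q (γ s))
      (iteratedFDeriv ℝ 3 ψ (γ t) ![deriv γ t, deriv γ t, γ t - q] +
        ⟪fderiv ℝ (gradient ψ) (γ t) a, γ t - q⟫ +
        ⟪fderiv ℝ (gradient ψ) (γ t) (deriv γ t), deriv γ t⟫) t := by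
  have hhess : Differentiable ℝ (fderiv ℝ (gradient ψ)) :=
    ((hψ.gradient (n := 2)).fderiv_right (m := 1) (by norm_num)).differentiable (by norm_num)
  have hderiv : deriv (fun s => bregmanDiv ψ q (γ s)) =
      fun s => ⟪fderiv ℝ (gradient ψ) (γ s) (deriv γ s), γ s - q⟫ :=
    funext fun s => ((hγ s).hasDerivAt.bregmanDiv_comp (hψ.of_le (by norm_num)) q).deriv
  rw [hderiv]
  refine ((((hhess (γ t)).hasFDerivAt.comp_hasDerivAt t (hγ t).hasDerivAt).clm_apply hγ').inner ℝ
    ((hγ t).hasDerivAt.sub_const q)).congr_deriv ?_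
  simp only [Function.comp_apply, iteratedFDeriv_three_apply_eq_inner, inner_add_left]
  ring

end Bregman

theorem second_derivative_of_divergence_amari_chentsov_general
    (n : ℕ) (ψ : EuclideanSpace ℝ (Fin n) → ℝ) (hψ : ContDiff ℝ 3 ψ)
    (ηq : EuclideanSpace ℝ (Fin n)) (lam : ℝ)
    (H : EuclideanSpace ℝ (Fin n) →
      EuclideanSpace ℝ (Fin n) →L[ℝ] EuclideanSpace ℝ (Fin n))
    (hH : ∀ η, H η = fderiv ℝ (gradient ψ) η)
    (F : EuclideanSpace ℝ (Fin n) → ℝ)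
    (hF : ∀ η, F η = ψ ηq - ψ η - ⟪gradient ψ η, ηq - η⟫)
    (η : ℝ → EuclideanSpace ℝ (Fin n)) (hη : Differentiable ℝ η)
    (hnewton : ∀ t, deriv η t = (-lam) • (η t - ηq)) :
    Differentiable ℝ (fun t => F (η t)) ∧
    Differentiable ℝ (deriv (fun t => F (η t))) ∧
    ∀ t, lam * deriv (deriv (fun s => F (η s))) t =
      -(iteratedFDeriv ℝ 3 ψ (η t) ![deriv η t, deriv η t, deriv η t]) +
        2 * lam * ⟪deriv η t, H (η t) (deriv η t)⟫ := by
  obtain rfl : F = bregmanDiv ψ ηq := funext hF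
  obtain rfl : H = fderiv ℝ (gradient ψ) := funext hH
  have hη' t : HasDerivAt η (deriv η t) t := (hη t).hasDerivAt
  have hη'' t : HasDerivAt (deriv η) ((-lam) • deriv η t) t :=
    (((hη' t).sub_const ηq).const_smul (-lam)).congr_of_eventuallyEq
      (Filter.Eventually.of_forall hnewton)
  have hsecond t := hasDerivAt_deriv_bregmanDiv_comp hψ ηq hη (hη'' t)
  refine ⟨fun t => ((hη' t).bregmanDiv_comp (hψ.of_le (by norm_num)) ηq).differentiableAt,
    fun t => (hsecond t).differentiableAt, fun t => ?_⟩
  have hcool : lam • (η t - ηq) = -deriv η t := by rw [hnewton, neg_smul, neg_neg]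
  rw [(hsecond t).deriv, iteratedFDeriv_three_apply_eq_inner, iteratedFDeriv_three_apply_eq_inner,
    mul_add, mul_add, ← real_inner_smul_right _ (η t - ηq), ← real_inner_smul_right _ (η t - ηq),
    hcool]
  simp only [map_smul, inner_neg_right, real_inner_smul_right, real_inner_comm (deriv η t)]
  ring

/-- Along a Newtonian relaxation `η̇ = −λ(η − ηq)` of a `C³` potential `ψ`, the Bregman
divergence satisfies
`λ (F∘η)''(t) = −D³ψ(η)[η̇, η̇, η̇] + 2λ ⟪η̇, H(η) η̇⟫`,
where `D³ψ` is the third Fréchet derivative (minus the Amari–Chentsov tensor). -/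
theorem second_derivative_of_divergence_amari_chentsov
    (n : ℕ) (ψ : EuclideanSpace ℝ (Fin n) → ℝ) (hψ : ContDiff ℝ 3 ψ)
    (ηq : EuclideanSpace ℝ (Fin n)) (lam : ℝ) (hlam : 0 < lam)
    (H : EuclideanSpace ℝ (Fin n) →
      EuclideanSpace ℝ (Fin n) →L[ℝ] EuclideanSpace ℝ (Fin n))
    (hH : ∀ η, H η = fderiv ℝ (gradient ψ) η)
    (F : EuclideanSpace ℝ (Fin n) → ℝ)
    (hF : ∀ η, F η = ψ ηq - ψ η - ⟪gradient ψ η, ηq - η⟫)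
    (η : ℝ → EuclideanSpace ℝ (Fin n)) (hη : Differentiable ℝ η)
    (hnewton : ∀ t, deriv η t = (-lam) • (η t - ηq)) :
    Differentiable ℝ (fun t => F (η t)) ∧
    Differentiable ℝ (deriv (fun t => F (η t))) ∧
    ∀ t, lam * deriv (deriv (fun s => F (η s))) t =
      -(iteratedFDeriv ℝ 3 ψ (η t) ![deriv η t, deriv η t, deriv η t]) +
        2 * lam * ⟪deriv η t, H (η t) (deriv η t)⟫ :=
  second_derivative_of_divergence_amari_chentsov_general n ψ hψ ηq lam H hH F hF η hη hnewton
end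

section
/- (Asymmetry criterion via critical points.) Let f : ℝ → ℝ be continuous on [0, ∞) and twice differentiable on (0, ∞), with f(0) = 0 and f(t) → 0 as t → ∞. Suppose that every critical point is a strict second-order maximum: for every t > 0 with f'(t) = 0 one has f''(t) < 0. Then f(t) > 0 for all t > 0. -/
open Set Filter

/-- Auxiliary: under the hypotheses, there is no local minimum in `(0, ∞)`. -/
lemma aux_no_localmin (f : ℝ → ℝ)
    (hdiff : ∀ t > (0:ℝ), DifferentiableAt ℝ f t)
    (hdiff2 : ∀ t > (0:ℝ), DifferentiableAt ℝ (deriv f) t)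
    (hcrit : ∀ t > (0:ℝ), deriv f t = 0 → deriv (deriv f) t < 0)
    {c : ℝ} (hc : 0 < c) (hmin : IsLocalMin f c) : False := by
  have hd0 : deriv f c = 0 := hmin.deriv_eq_zero
  have h2 : deriv (deriv f) c < 0 := hcrit c hc hd0
  have hg : HasDerivAt (deriv f) (deriv (deriv f) c) c := (hdiff2 c hc).hasDerivAt
  have hslope := hasDerivAt_iff_tendsto_slope.mp hg
  have h1 : ∀ᶠ t in nhdsWithin c {c}ᶜ, slope (deriv f) c t < 0 :=
    hslope.eventually (gt_mem_nhds h2)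
  have h1' : ∀ᶠ t in nhdsWithin c (Set.Ioi c), slope (deriv f) c t < 0 :=
    h1.filter_mono (nhdsWithin_mono c (fun x hx => ne_of_gt hx))
  have hev : ∀ᶠ t in nhdsWithin c (Set.Ioi c), deriv f t < 0 := by
    filter_upwards [h1', self_mem_nhdsWithin] with t ht htc
    rw [slope_def_field, hd0, sub_zero] at ht
    rcases div_neg_iff.mp ht with ⟨_, h⟩ | ⟨h, _⟩
    · linarith [Set.mem_Ioi.mp htc]
    · exact h
  obtain ⟨u, hu, hsub⟩ := mem_nhdsGT_iff_exists_Ioo_subset.mp hev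
  obtain ⟨ε, hε, hball⟩ := Metric.eventually_nhds_iff.mp hmin
  set b : ℝ := min u (c + ε) with hb
  have hcb : c < b := lt_min hu (by linarith)
  set t : ℝ := (c + b) / 2 with htdef
  have hct : c < t := by simp only [htdef]; linarith
  have htb : t < b := by simp only [htdef]; linarith
  have hcont' : ContinuousOn f (Set.Icc c t) := fun x hx =>
    (hdiff x (lt_of_lt_of_le hc hx.1)).continuousAt.continuousWithinAt
  have hder : ∀ x ∈ Set.Ioo c t, HasDerivAt f (deriv f x) x := fun x hx =>
    (hdiff x (lt_trans hc hx.1)).hasDerivAt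
  obtain ⟨ξ, hξ, hξeq⟩ := exists_hasDerivAt_eq_slope f (deriv f) hct hcont' hder
  have hneg : deriv f ξ < 0 := hsub ⟨hξ.1, lt_of_lt_of_le (lt_trans hξ.2 htb) (min_le_left _ _)⟩
  have hfle : f c ≤ f t := by
    apply hball
    rw [Real.dist_eq, abs_of_pos (by linarith)]
    have : t < c + ε := lt_of_lt_of_le htb (min_le_right _ _)
    linarith
  rw [hξeq] at hneg
  have : (0:ℝ) ≤ (f t - f c) / (t - c) := div_nonneg (by linarith) (by linarith)
  linarith

/-- **Asymmetry criterion via critical points.** If `f` is continuous on `[0, ∞)`,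
twice differentiable on `(0, ∞)`, vanishes at `0` and at infinity, and every critical
point in `(0, ∞)` is a strict second-order maximum (`f' = 0 → f'' < 0`), then `f` is
strictly positive on `(0, ∞)`. -/
theorem positive_of_critical_points_strict_maxima
    (f : ℝ → ℝ)
    (hcont : ContinuousOn f (Set.Ici 0))
    (hdiff : ∀ t > (0:ℝ), DifferentiableAt ℝ f t)
    (hdiff2 : ∀ t > (0:ℝ), DifferentiableAt ℝ (deriv f) t)
    (h0 : f 0 = 0)
    (hlim : Filter.Tendsto f Filter.atTop (nhds 0))
    (hcrit : ∀ t > (0:ℝ), deriv f t = 0 → deriv (deriv f) t < 0) :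
    ∀ t > (0:ℝ), 0 < f t := by
  -- First: f is nonnegative on [0, ∞).
  have hnonneg : ∀ s > (0:ℝ), 0 ≤ f s := by
    intro s hs
    by_contra hneg
    push_neg at hneg
    -- find T ≥ s with f t > f s for all t ≥ T
    have hev : ∀ᶠ t in atTop, f s < f t := hlim.eventually (lt_mem_nhds hneg)
    obtain ⟨T₀, hT₀⟩ := hev.exists_forall_of_atTop
    set T : ℝ := max T₀ (s + 1) with hTdef
    have hsT : s < T := lt_of_lt_of_le (by linarith) (le_max_right _ _)
    have hT0 : (0:ℝ) < T := lt_trans hs hsT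
    have hfT : f s < f T := hT₀ T (le_max_left _ _)
    -- minimum on the compact interval [0, T]
    have hcomp : IsCompact (Set.Icc (0:ℝ) T) := isCompact_Icc
    have hcont' : ContinuousOn f (Set.Icc 0 T) := hcont.mono Set.Icc_subset_Ici_self
    obtain ⟨c, hcmem, hcmin⟩ :=
      hcomp.exists_isMinOn ⟨0, by constructor <;> [rfl; exact le_of_lt hT0]⟩ hcont'
    have hfc_le : f c ≤ f s := hcmin ⟨le_of_lt hs, le_of_lt hsT⟩
    have hc0 : 0 < c := by
      rcases lt_or_eq_of_le hcmem.1 with h | h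
      · exact h
      · exfalso; rw [← h, h0] at hfc_le; linarith
    have hcT : c < T := by
      rcases lt_or_eq_of_le hcmem.2 with h | h
      · exact h
      · exfalso; rw [h] at hfc_le; linarith
    have hloc : IsLocalMin f c := hcmin.isLocalMin (Icc_mem_nhds hc0 hcT)
    exact aux_no_localmin f hdiff hdiff2 hcrit hc0 hloc
  -- Now strict positivity.
  intro t ht
  rcases lt_or_eq_of_le (hnonneg t ht) with h | h
  · exact h
  · exfalso
    have hloc : IsLocalMin f t := by
      have : Set.Ioi (0:ℝ) ∈ nhds t := Ioi_mem_nhds ht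
      filter_upwards [this] with x hx
      rw [← h]
      exact hnonneg x hx
    exact aux_no_localmin f hdiff hdiff2 hcrit ht hloc
end

section
/- Fix T_q > 0 and let g(T) := T − T_q · log T. If 0 < T⁻ < T_q < T⁺ and g(T⁺) = g(T⁻) (thermodynamic equidistance), then T⁺ − T_q > T_q − T⁻ (the hotter state is strictly farther from T_q in temperature) and T⁺ · T⁻ < T_q². -/
/-!
Subtracting the two sides of `g T⁺ = g T⁻` gives `T⁺ - T⁻ = T_q (log T⁺ - log T⁻)`: the bath
temperature is the logarithmic mean of `T⁻` and `T⁺`. Both claims are then the classical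
strict inequalities `√(T⁻ T⁺) < L(T⁻, T⁺) < (T⁻ + T⁺) / 2` between the geometric, logarithmic
and arithmetic means, which after scaling reduce to `2 (r - 1) < (r + 1) log r` and
`2 log u < u - u⁻¹` for `r, u > 1`; both follow from a positive derivative on `[1, ∞)`.
-/

open Real Set

lemma strictMonoOn_Ici_of_hasDerivAt_pos {f f' : ℝ → ℝ} {a : ℝ}
    (hf : ∀ x ∈ Ici a, HasDerivAt f (f' x) x) (hf' : ∀ x ∈ Ioi a, 0 < f' x) :
    StrictMonoOn f (Ici a) :=
  strictMonoOn_of_hasDerivWithinAt_pos (convex_Ici a)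
    (fun x hx ↦ (hf x hx).continuousAt.continuousWithinAt)
    (fun x hx ↦ by
      rw [interior_Ici] at hx ⊢
      exact (hf x (Ioi_subset_Ici_self hx)).hasDerivWithinAt)
    (by rwa [interior_Ici])

lemma one_sub_inv_lt_log {x : ℝ} (hx : 1 < x) : 1 - x⁻¹ < log x := by
  have := log_lt_sub_one_of_pos (inv_pos.2 (zero_lt_one.trans hx)) (inv_ne_one.2 hx.ne')
  rw [log_inv] at this
  linarith

lemma two_mul_sub_one_lt_add_one_mul_log {r : ℝ} (hr : 1 < r) :
    2 * (r - 1) < (r + 1) * log r := by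
  let f x := (x + 1) * log x - 2 * (x - 1)
  have hf : ∀ x ∈ Ici (1 : ℝ), HasDerivAt f (1 * log x + (x + 1) * x⁻¹ - 2 * 1) x :=
    fun x hx ↦
      (((hasDerivAt_id x).add_const 1).mul (hasDerivAt_log (zero_lt_one.trans_le hx).ne')).sub
        (((hasDerivAt_id x).sub_const 1).const_mul 2)
  have hf' : ∀ x ∈ Ioi (1 : ℝ), 0 < 1 * log x + (x + 1) * x⁻¹ - 2 * 1 := fun x hx ↦ by
    have hx0 : x ≠ 0 := (zero_lt_one.trans hx).ne'
    have : (x + 1) * x⁻¹ = 1 + x⁻¹ := by field_simp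
    linarith [one_sub_inv_lt_log hx]
  have := strictMonoOn_Ici_of_hasDerivAt_pos hf hf' self_mem_Ici hr.le hr
  simp only [f, log_one] at this
  linarith

lemma two_mul_log_lt_sub_inv {u : ℝ} (hu : 1 < u) : 2 * log u < u - u⁻¹ := by
  let f x := x - x⁻¹ - 2 * log x
  have hf : ∀ x ∈ Ici (1 : ℝ), HasDerivAt f (1 - -(x ^ 2)⁻¹ - 2 * x⁻¹) x := fun x hx ↦ by
    have hx0 : x ≠ 0 := (zero_lt_one.trans_le hx).ne'
    exact ((hasDerivAt_id x).sub (hasDerivAt_inv hx0)).sub ((hasDerivAt_log hx0).const_mul 2)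
  have hf' : ∀ x ∈ Ioi (1 : ℝ), 0 < 1 - -(x ^ 2)⁻¹ - 2 * x⁻¹ := fun x hx ↦ by
    have hx0 : x ≠ 0 := (zero_lt_one.trans hx).ne'
    have hsq : 1 - -(x ^ 2)⁻¹ - 2 * x⁻¹ = (1 - x⁻¹) ^ 2 := by field_simp; ring
    rw [hsq]
    exact pow_pos (sub_pos.2 (inv_lt_one_of_one_lt₀ hx)) 2
  have := strictMonoOn_Ici_of_hasDerivAt_pos hf hf' self_mem_Ici hu.le hu
  norm_num [f] at this
  linarith

noncomputable def logMean (a b : ℝ) : ℝ := (b - a) / (log b - log a)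

lemma logMean_lt_add_div_two {a b : ℝ} (ha : 0 < a) (hab : a < b) :
    logMean a b < (a + b) / 2 := by
  obtain ⟨r, hr, rfl⟩ : ∃ r, 1 < r ∧ a * r = b :=
    ⟨b / a, (one_lt_div ha).2 hab, mul_div_cancel₀ b ha.ne'⟩
  have hlog : log (a * r) - log a = log r := by
    rw [log_mul ha.ne' (by positivity), add_sub_cancel_left]
  rw [logMean, hlog, div_lt_iff₀ (log_pos hr)]
  nlinarith [two_mul_sub_one_lt_add_one_mul_log hr]

lemma sqrt_mul_lt_logMean {a b : ℝ} (ha : 0 < a) (hab : a < b) :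
    √(a * b) < logMean a b := by
  obtain ⟨x, hx, rfl⟩ : ∃ x, 0 < x ∧ x ^ 2 = a := ⟨√a, sqrt_pos.2 ha, sq_sqrt ha.le⟩
  obtain ⟨y, hy, rfl⟩ : ∃ y, 0 < y ∧ y ^ 2 = b :=
    ⟨√b, sqrt_pos.2 (ha.trans hab), sq_sqrt (ha.trans hab).le⟩
  have hxy : 1 < y / x :=
    (one_lt_div hx).2 ((pow_lt_pow_iff_left₀ hx.le hy.le two_ne_zero).1 hab)
  have hsqrt : √(x ^ 2 * y ^ 2) = x * y := by rw [← mul_pow, sqrt_sq (by positivity)]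
  have hlog : log (y ^ 2) - log (x ^ 2) = 2 * log (y / x) := by
    rw [log_div hy.ne' hx.ne', log_pow, log_pow]; push_cast; ring
  have hmul : x * y * (y / x - (y / x)⁻¹) = y ^ 2 - x ^ 2 := by field_simp
  rw [logMean, hsqrt, hlog, lt_div_iff₀ (mul_pos two_pos (log_pos hxy)), ← hmul]
  exact mul_lt_mul_of_pos_left (two_mul_log_lt_sub_inv hxy) (by positivity)

theorem equidistant_hotter_is_farther_general
    (Tq : ℝ) (g : ℝ → ℝ)
    (hg : ∀ T, g T = T - Tq * Real.log T)
    (Tm Tp : ℝ) (hTm0 : 0 < Tm) (hTm : Tm < Tq) (hTp : Tq < Tp)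
    (heq : g Tp = g Tm) :
    Tq - Tm < Tp - Tq ∧ Tp * Tm < Tq ^ 2 := by
  have hlt : Tm < Tp := hTm.trans hTp
  have hmean : Tq = logMean Tm Tp := by
    have hlog : 0 < log Tp - log Tm := sub_pos.2 (log_lt_log hTm0 hlt)
    rw [logMean, eq_div_iff hlog.ne']
    rw [hg, hg] at heq
    linarith
  constructor
  · rw [hmean]
    linarith [logMean_lt_add_div_two hTm0 hlt]
  · rw [mul_comm, ← sqrt_lt' (hTm0.trans hTm), hmean]
    exact sqrt_mul_lt_logMean hTm0 hlt

/-- For thermodynamically equidistant temperatures `T⁻ < T_q < T⁺` (i.e. with equal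
availability `g(T) = T − T_q log T`), the hotter state is strictly farther from `T_q`
in temperature, and `T⁺ T⁻ < T_q²`. -/
theorem equidistant_hotter_is_farther
    (Tq : ℝ) (hTq : 0 < Tq) (g : ℝ → ℝ)
    (hg : ∀ T, g T = T - Tq * Real.log T)
    (Tm Tp : ℝ) (hTm0 : 0 < Tm) (hTm : Tm < Tq) (hTp : Tq < Tp)
    (heq : g Tp = g Tm) :
    Tq - Tm < Tp - Tq ∧ Tp * Tm < Tq ^ 2 :=
  equidistant_hotter_is_farther_general Tq g hg Tm Tp hTm0 hTm hTp heq
end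

section
/- Let λ > 0, 0 < T₀⁻ < T_q < T₀⁺, T^±(t) := T_q + (T₀^± − T_q) e^{−λ t}, and Δ(t) := (T⁺(t) − T⁻(t)) − T_q log(T⁺(t)/T⁻(t)). If t* > 0 satisfies T⁺(t*) · T⁻(t*) = T_q², then Δ''(t*) = −(λ² / T_q) (T⁺(t*) − T⁻(t*)) (√(T⁺(t*)) − √(T⁻(t*)))², which is strictly negative; hence every critical point of Δ in (0, ∞) is a strict local maximum. -/
/-!
Along Newton cooling `Ṫ = -λ (T - T_q)`, the availability difference has derivative
`Δ' = -λ (T⁺ - T⁻) (1 - T_q² / (T⁺ T⁻))`, which vanishes exactly where `T⁺ T⁻ = T_q²`.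
At such a point the product rule only sees the derivative of the second factor, and
`(T⁺ T⁻)' = λ T_q (T⁺ + T⁻ - 2 T_q)` there, so `Δ'' = -(λ² / T_q) (T⁺ - T⁻) (T⁺ + T⁻ - 2 T_q)`;
since `√T⁺ √T⁻ = T_q`, the last factor is `(√T⁺ - √T⁻)²`. A negative second derivative at a
critical point gives a strict local maximum.
-/

open Real Filter Topology Set

section SecondDerivativeTest

variable {f : ℝ → ℝ} {a b : ℝ}

theorem strictMonoOn_Ioc_of_deriv_pos (hc : ContinuousAt f b)
    (hf : ∀ x ∈ Ioo a b, 0 < deriv f x) : StrictMonoOn f (Ioc a b) := by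
  refine strictMonoOn_of_deriv_pos (convex_Ioc a b) (fun x hx => ?_) (by simpa using hf)
  rcases hx.2.eq_or_lt with rfl | hlt
  · exact hc.continuousWithinAt
  · exact (differentiableAt_of_deriv_ne_zero (hf x ⟨hx.1, hlt⟩).ne').continuousAt.continuousWithinAt

theorem strictAntiOn_Ico_of_deriv_neg (hc : ContinuousAt f a)
    (hf : ∀ x ∈ Ioo a b, deriv f x < 0) : StrictAntiOn f (Ico a b) := by
  refine strictAntiOn_of_deriv_neg (convex_Ico a b) (fun x hx => ?_) (by simpa using hf)
  rcases hx.1.eq_or_lt with rfl | hlt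
  · exact hc.continuousWithinAt
  · exact (differentiableAt_of_deriv_ne_zero (hf x ⟨hlt, hx.2⟩).ne).continuousAt.continuousWithinAt

theorem eventually_lt_of_deriv_deriv_neg (hf : deriv (deriv f) b < 0) (hd : deriv f b = 0)
    (hc : ContinuousAt f b) : ∀ᶠ x in 𝓝[≠] b, f x < f b := by
  have hsign : ∀ᶠ x in 𝓝[≠] b, _ :=
    nhdsWithin_le_nhds (eventually_nhdsWithin_sign_eq_of_deriv_neg hf hd)
  obtain ⟨a, hab, hleft⟩ :=
    (nhdsLT_basis b).eventually_iff.mp (deriv_pos_left_of_sign_deriv hsign)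
  obtain ⟨c, hbc, hright⟩ :=
    (nhdsGT_basis b).eventually_iff.mp (deriv_neg_right_of_sign_deriv hsign)
  have hmono := strictMonoOn_Ioc_of_deriv_pos hc fun x hx => hleft hx
  have hanti := strictAntiOn_Ico_of_deriv_neg hc fun x hx => hright hx
  rw [← nhdsLT_sup_nhdsGT, eventually_sup]
  constructor
  · filter_upwards [Ioo_mem_nhdsLT hab] with x hx
    exact hmono ⟨hx.1, hx.2.le⟩ ⟨hab, le_rfl⟩ hx.2
  · filter_upwards [Ioo_mem_nhdsGT hbc] with x hx
    exact hanti ⟨le_rfl, hbc⟩ ⟨hx.1.le, hx.2⟩ hx.1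

end SecondDerivativeTest

theorem sq_sqrt_sub_sqrt_of_mul_eq_sq {x y c : ℝ} (hx : 0 ≤ x) (hy : 0 ≤ y) (hc : 0 ≤ c)
    (h : x * y = c ^ 2) : (√x - √y) ^ 2 = x + y - 2 * c := by
  have hxy : √x * √y = c := by rw [← sqrt_mul hx, h, sqrt_sq hc]
  linear_combination sq_sqrt hx + sq_sqrt hy - 2 * hxy

section NewtonCooling

variable {lam Tq T0 : ℝ} {T : ℝ → ℝ}

theorem hasDerivAt_of_newton_cooling (hT : ∀ t, T t = Tq + (T0 - Tq) * exp (-lam * t))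
    (t : ℝ) : HasDerivAt T (-lam * (T t - Tq)) t := by
  rw [show T = fun s => Tq + (T0 - Tq) * exp (-lam * s) from funext hT]
  refine ((((hasDerivAt_id t).const_mul (-lam)).exp.const_mul (T0 - Tq)).const_add Tq).congr_deriv
    ?_
  simp only [id, mul_one]
  ring

theorem newton_cooling_pos (hlam : 0 ≤ lam) (hTq : 0 < Tq) (hT0 : 0 < T0)
    (hT : ∀ t, T t = Tq + (T0 - Tq) * exp (-lam * t)) {t : ℝ} (ht : 0 ≤ t) : 0 < T t := by
  have hE : exp (-lam * t) ≤ 1 := exp_le_one_iff.mpr (by nlinarith)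
  rw [hT, show Tq + (T0 - Tq) * exp (-lam * t) = (1 - exp (-lam * t)) * Tq + exp (-lam * t) * T0
    by ring]
  exact add_pos_of_nonneg_of_pos (mul_nonneg (sub_nonneg.mpr hE) hTq.le) (by positivity)

end NewtonCooling

section AvailabilityDifference

variable {lam Tq : ℝ} {Tp Tm : ℝ → ℝ} {t : ℝ}

theorem hasDerivAt_availability_difference (hTp : HasDerivAt Tp (-lam * (Tp t - Tq)) t)
    (hTm : HasDerivAt Tm (-lam * (Tm t - Tq)) t) (hp : Tp t ≠ 0) (hm : Tm t ≠ 0) :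
    HasDerivAt (fun s => (Tp s - Tm s) - Tq * log (Tp s / Tm s))
      (-lam * (Tp t - Tm t) * (1 - Tq ^ 2 / (Tp t * Tm t))) t := by
  refine ((hTp.sub hTm).sub
    (((hTp.div hTm hm).log (div_ne_zero hp hm)).const_mul Tq)).congr_deriv ?_
  simp only [Pi.div_apply]
  field_simp
  ring

theorem hasDerivAt_deriv_availability_difference_of_mul_eq
    (hTp : HasDerivAt Tp (-lam * (Tp t - Tq)) t) (hTm : HasDerivAt Tm (-lam * (Tm t - Tq)) t)
    (hTq : Tq ≠ 0) (hcrit : Tp t * Tm t = Tq ^ 2) :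
    HasDerivAt (fun s => -lam * (Tp s - Tm s) * (1 - Tq ^ 2 / (Tp s * Tm s)))
      (-(lam ^ 2 / Tq) * (Tp t - Tm t) * (Tp t + Tm t - 2 * Tq)) t := by
  have hprod : Tp t * Tm t ≠ 0 := by rw [hcrit]; positivity
  refine (((hTp.sub hTm).const_mul (-lam)).mul ((hasDerivAt_const t 1).sub
    ((hasDerivAt_const t (Tq ^ 2)).div (hTp.mul hTm) hprod))).congr_deriv ?_
  simp only [Pi.sub_apply, Pi.mul_apply, Pi.div_apply, hcrit]
  field_simp
  linear_combination 2 * lam ^ 2 * (Tp t - Tm t) * hcrit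

end AvailabilityDifference

/-- At any time `t* > 0` with `T⁺(t*) T⁻(t*) = T_q²`, the second derivative of the
availability difference `Δ` equals
`−(λ²/T_q)(T⁺ − T⁻)(√T⁺ − √T⁻)² < 0`; hence every critical point of `Δ` in `(0, ∞)` is
a strict local maximum. -/
theorem critical_points_are_strict_maxima
    (lam Tq T0m T0p : ℝ) (hlam : 0 < lam)
    (hT0m : 0 < T0m) (hTm : T0m < Tq) (hTp : Tq < T0p)
    (Tp Tm : ℝ → ℝ)
    (hTpdef : ∀ t, Tp t = Tq + (T0p - Tq) * Real.exp (-lam * t))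
    (hTmdef : ∀ t, Tm t = Tq + (T0m - Tq) * Real.exp (-lam * t))
    (Δ : ℝ → ℝ)
    (hΔ : ∀ t, Δ t = (Tp t - Tm t) - Tq * Real.log (Tp t / Tm t))
    (tstar : ℝ) (htstar : 0 < tstar)
    (hcrit : Tp tstar * Tm tstar = Tq ^ 2) :
    deriv (deriv Δ) tstar =
      -(lam ^ 2 / Tq) * (Tp tstar - Tm tstar) *
        (Real.sqrt (Tp tstar) - Real.sqrt (Tm tstar)) ^ 2 ∧
    deriv (deriv Δ) tstar < 0 ∧
    (∀ᶠ s in nhdsWithin tstar {tstar}ᶜ, Δ s < Δ tstar) := by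
  have hTq : 0 < Tq := hT0m.trans hTm
  have hTp' := hasDerivAt_of_newton_cooling hTpdef
  have hTm' := hasDerivAt_of_newton_cooling hTmdef
  have hpos : ∀ t, 0 < t → 0 < Tp t ∧ 0 < Tm t := fun t ht =>
    ⟨newton_cooling_pos hlam.le hTq (hTq.trans hTp) hTpdef ht.le,
      newton_cooling_pos hlam.le hTq hT0m hTmdef ht.le⟩
  have hΔ' : ∀ t, 0 < t → HasDerivAt Δ (-lam * (Tp t - Tm t) * (1 - Tq ^ 2 / (Tp t * Tm t))) t :=
    fun t ht => funext hΔ ▸ hasDerivAt_availability_difference (hTp' t) (hTm' t)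
      (hpos t ht).1.ne' (hpos t ht).2.ne'
  obtain ⟨hp, hm⟩ := hpos tstar htstar
  have hgap : Tm tstar < Tp tstar := by
    rw [hTpdef, hTmdef]
    nlinarith [exp_pos (-lam * tstar)]
  have hΔ'' : deriv (deriv Δ) tstar = -(lam ^ 2 / Tq) * (Tp tstar - Tm tstar) *
      (Real.sqrt (Tp tstar) - Real.sqrt (Tm tstar)) ^ 2 := by
    have hderiv : deriv Δ =ᶠ[𝓝 tstar] _ := eventually_of_mem (Ioi_mem_nhds htstar)
      fun t ht => (hΔ' t ht).deriv
    rw [hderiv.deriv_eq, (hasDerivAt_deriv_availability_difference_of_mul_eq (hTp' tstar)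
      (hTm' tstar) hTq.ne' hcrit).deriv, sq_sqrt_sub_sqrt_of_mul_eq_sq hp.le hm.le hTq.le hcrit]
  have hneg : deriv (deriv Δ) tstar < 0 := by
    have hsqrt : √(Tm tstar) < √(Tp tstar) := sqrt_lt_sqrt hm.le hgap
    rw [hΔ'']
    exact mul_neg_of_neg_of_pos (mul_neg_of_neg_of_pos (neg_neg_of_pos (by positivity))
      (sub_pos.mpr hgap)) (pow_pos (sub_pos.mpr hsqrt) 2)
  have hcritical : deriv Δ tstar = 0 := by
    rw [(hΔ' tstar htstar).deriv, hcrit, div_self (pow_ne_zero 2 hTq.ne'), sub_self, mul_zero]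
  exact ⟨hΔ'', hneg,
    eventually_lt_of_deriv_deriv_neg hneg hcritical (hΔ' tstar htstar).continuousAt⟩
end

section
/- (A closed ideal gas warms up faster than it cools down.) Let λ > 0 and 0 < T₀⁻ < T_q < T₀⁺ be thermodynamically equidistant, i.e., T₀⁺ − T_q · log T₀⁺ = T₀⁻ − T_q · log T₀⁻. Let T^±(t) := T_q + (T₀^± − T_q) e^{−λ t} be the solutions of Newton's Law of Cooling. Then for every t > 0, (T⁺(t) − T⁻(t)) − T_q · log(T⁺(t)/T⁻(t)) > 0; equivalently, the availability (Bregman divergence to equilibrium) of the cooling system strictly exceeds that of the warming system at every positive time: D*(T⁺(t)) > D*(T⁻(t)) where D*(T) := (c+1) N k_B (T − T_q − T_q · log(T/T_q)) for any constants c, N, k_B > 0. -/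
/-!
With `s = exp (-lam * t) ∈ (0, 1)` both temperatures move along the segments
`T±(s) = Tq + (T₀± - Tq) s`. For `f T = T - Tq log T`, the difference
`h s = f (T⁺ s) - f (T⁻ s)` vanishes at `s = 0` and, by equidistance, at `s = 1`.
Since `f' T = (T - Tq) / T`, its derivative is `h' s = s φ s` with
`φ s = (T₀⁺ - Tq)² / T⁺ s - (T₀⁻ - Tq)² / T⁻ s` strictly decreasing, so `h` first
increases and then decreases, and is therefore positive on `(0, 1)`.
-/

open Real Set

theorem lt_of_hasDerivAt_eq_mul_strictAntiOn {h w φ : ℝ → ℝ} {a b x : ℝ}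
    (hcont : ContinuousOn h (Icc a b)) (hderiv : ∀ y ∈ Ioo a b, HasDerivAt h (w y * φ y) y)
    (hw : ∀ y ∈ Ioo a b, 0 < w y) (hφ : StrictAntiOn φ (Ioo a b))
    (hab : h a ≤ h b) (hx : x ∈ Ioo a b) : h a < h x := by
  obtain ⟨hax, hxb⟩ := hx
  rcases le_or_gt 0 (φ x) with hφx | hφx
  · have hmono : StrictMonoOn h (Icc a x) := by
      refine strictMonoOn_of_deriv_pos (convex_Icc a x)
        (hcont.mono (Icc_subset_Icc_right hxb.le)) fun y hy => ?_
      rw [interior_Icc] at hy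
      have hy' : y ∈ Ioo a b := ⟨hy.1, hy.2.trans hxb⟩
      rw [(hderiv y hy').deriv]
      exact mul_pos (hw y hy') (hφx.trans_lt (hφ hy' ⟨hax, hxb⟩ hy.2))
    exact hmono (left_mem_Icc.2 hax.le) (right_mem_Icc.2 hax.le) hax
  · have hanti : StrictAntiOn h (Icc x b) := by
      refine strictAntiOn_of_deriv_neg (convex_Icc x b)
        (hcont.mono (Icc_subset_Icc_left hax.le)) fun y hy => ?_
      rw [interior_Icc] at hy
      have hy' : y ∈ Ioo a b := ⟨hax.trans hy.1, hy.2⟩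
      rw [(hderiv y hy').deriv]
      exact mul_neg_of_pos_of_neg (hw y hy') ((hφ ⟨hax, hxb⟩ hy' hy.1).trans hφx)
    exact hab.trans_lt (hanti (left_mem_Icc.2 hxb.le) (right_mem_Icc.2 hxb.le) hxb)

theorem add_sub_mul_pos {Tq T₀ s : ℝ} (hTq : 0 < Tq) (hT₀ : 0 < T₀) (hs : s ∈ Icc 0 1) :
    0 < Tq + (T₀ - Tq) * s := by
  have hmin : 0 < min Tq T₀ := lt_min hTq hT₀
  nlinarith [mul_le_mul_of_nonneg_left (min_le_left Tq T₀) (sub_nonneg.2 hs.2),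
    mul_le_mul_of_nonneg_left (min_le_right Tq T₀) hs.1]

theorem hasDerivAt_sub_mul_log_add_mul {Tq d s : ℝ} (hpos : 0 < Tq + d * s) :
    HasDerivAt (fun σ => (Tq + d * σ) - Tq * log (Tq + d * σ))
      (s * (d ^ 2 / (Tq + d * s))) s := by
  have hlin : HasDerivAt (fun σ => Tq + d * σ) d s := by
    simpa using ((hasDerivAt_id s).const_mul d).const_add Tq
  refine (hlin.fun_sub ((hlin.log hpos.ne').const_mul Tq)).congr_deriv ?_
  field_simp
  ring

theorem sub_mul_log_lt_of_equidistant {Tq T0m T0p s : ℝ}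
    (hT0m : 0 < T0m) (hTm : T0m < Tq) (hTp : Tq < T0p)
    (heq : T0p - Tq * log T0p = T0m - Tq * log T0m) (hs : s ∈ Ioo 0 1) :
    (Tq + (T0m - Tq) * s) - Tq * log (Tq + (T0m - Tq) * s) <
      (Tq + (T0p - Tq) * s) - Tq * log (Tq + (T0p - Tq) * s) := by
  have hTq : 0 < Tq := hT0m.trans hTm
  have hposp : ∀ σ ∈ Icc (0 : ℝ) 1, 0 < Tq + (T0p - Tq) * σ :=
    fun σ hσ => add_sub_mul_pos hTq (hTq.trans hTp) hσ
  have hposm : ∀ σ ∈ Icc (0 : ℝ) 1, 0 < Tq + (T0m - Tq) * σ :=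
    fun σ hσ => add_sub_mul_pos hTq hT0m hσ
  set h : ℝ → ℝ := fun σ => ((Tq + (T0p - Tq) * σ) - Tq * log (Tq + (T0p - Tq) * σ)) -
    ((Tq + (T0m - Tq) * σ) - Tq * log (Tq + (T0m - Tq) * σ)) with h_def
  have hderiv : ∀ σ ∈ Icc (0 : ℝ) 1, HasDerivAt h (σ * ((T0p - Tq) ^ 2 /
      (Tq + (T0p - Tq) * σ) - (T0m - Tq) ^ 2 / (Tq + (T0m - Tq) * σ))) σ := fun σ hσ => by
    rw [mul_sub]
    exact (hasDerivAt_sub_mul_log_add_mul (hposp σ hσ)).sub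
      (hasDerivAt_sub_mul_log_add_mul (hposm σ hσ))
  have hφ : StrictAntiOn (fun σ => (T0p - Tq) ^ 2 / (Tq + (T0p - Tq) * σ) -
      (T0m - Tq) ^ 2 / (Tq + (T0m - Tq) * σ)) (Ioo 0 1) := by
    intro σ hσ τ hτ hστ
    have hp : (T0p - Tq) ^ 2 / (Tq + (T0p - Tq) * τ) < (T0p - Tq) ^ 2 / (Tq + (T0p - Tq) * σ) :=
      div_lt_div_of_pos_left (by nlinarith) (hposp σ (Ioo_subset_Icc_self hσ)) (by nlinarith)
    have hm : (T0m - Tq) ^ 2 / (Tq + (T0m - Tq) * σ) < (T0m - Tq) ^ 2 / (Tq + (T0m - Tq) * τ) :=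
      div_lt_div_of_pos_left (by nlinarith) (hposm τ (Ioo_subset_Icc_self hτ)) (by nlinarith)
    dsimp only
    linarith
  have hlt : h 0 < h s :=
    lt_of_hasDerivAt_eq_mul_strictAntiOn
      (fun σ hσ => (hderiv σ hσ).continuousAt.continuousWithinAt)
      (fun σ hσ => hderiv σ (Ioo_subset_Icc_self hσ)) (fun _ hσ => hσ.1) hφ
      (by simp [h_def, heq]) hs
  simp only [h_def, mul_zero, add_zero, sub_self] at hlt
  linarith

/-- **A closed ideal gas warms up faster than it cools down.** For thermodynamically
equidistant initial temperatures `T₀⁻ < T_q < T₀⁺` relaxing by Newton's Law of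
Cooling, the availability difference is strictly positive at every positive time:
the cooling system is always strictly farther from equilibrium than the warming
system, as measured by the Bregman divergence
`D*(T) = (c+1) N k_B (T − T_q − T_q log(T/T_q))`. -/
theorem ideal_gas_warms_up_faster
    (lam Tq T0m T0p : ℝ) (hlam : 0 < lam)
    (hT0m : 0 < T0m) (hTm : T0m < Tq) (hTp : Tq < T0p)
    (heq : T0p - Tq * Real.log T0p = T0m - Tq * Real.log T0m)
    (Tp Tm : ℝ → ℝ)
    (hTpdef : ∀ t, Tp t = Tq + (T0p - Tq) * Real.exp (-lam * t))
    (hTmdef : ∀ t, Tm t = Tq + (T0m - Tq) * Real.exp (-lam * t))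
    (D : ℝ → ℝ) (c N kB : ℝ) (hc : 0 < c) (hN : 0 < N) (hkB : 0 < kB)
    (hD : ∀ T, D T = (c + 1) * N * kB * (T - Tq - Tq * Real.log (T / Tq))) :
    ∀ t > (0:ℝ),
      0 < (Tp t - Tm t) - Tq * Real.log (Tp t / Tm t) ∧
      D (Tm t) < D (Tp t) := by
  intro t ht
  have hTq : 0 < Tq := hT0m.trans hTm
  have hs : exp (-lam * t) ∈ Ioo 0 1 := ⟨exp_pos _, exp_lt_one_iff.2 (by nlinarith)⟩
  have hTp_pos : 0 < Tp t :=
    hTpdef t ▸ add_sub_mul_pos hTq (hTq.trans hTp) (Ioo_subset_Icc_self hs)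
  have hTm_pos : 0 < Tm t :=
    hTmdef t ▸ add_sub_mul_pos hTq hT0m (Ioo_subset_Icc_self hs)
  have key := sub_mul_log_lt_of_equidistant hT0m hTm hTp heq hs
  rw [← hTpdef, ← hTmdef] at key
  refine ⟨by rw [log_div hTp_pos.ne' hTm_pos.ne']; linarith, ?_⟩
  rw [hD, hD, log_div hTp_pos.ne' hTq.ne', log_div hTm_pos.ne' hTq.ne']
  exact mul_lt_mul_of_pos_left (by linarith) (by positivity)
end

section
/- (Bosonic rigid ideal gas cools down faster: sign of the Amari–Chentsov component.) Let k > 0, κ > 0, a ≥ 1/2, μ < 0, T > 0, and set ξ := exp(μ / (k T)) ∈ (0,1) and Li_b(ξ) := ∑_{n=1}^∞ ξⁿ / n^b. Then the bosonic Amari–Chentsov component C := κ · k^{a−1} · T^{a−4} · Γ(a+1) · ( μ³ · Li_{a−1}(ξ) + a k T · ( (a+1) k T · ( 3 μ · Li_{a+1}(ξ) − (a+2) k T · Li_{a+2}(ξ) ) − 3 μ² · Li_a(ξ) ) ) is strictly negative, where Γ is the real Gamma function. -/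
/-- **Bosonic rigid ideal gas cools down faster.** For an ideal Bose gas at negative
chemical potential `μ` and positive temperature `T`, the Amari–Chentsov component
`C¹¹¹ = −∂³ψ/∂T³` at constant `μ`, expressed through the polylogarithms
`Li_b(ξ) = ∑_{n≥1} ξⁿ/n^b` of the fugacity `ξ = e^{μ/(kT)} ∈ (0,1)`, is strictly
negative. -/
theorem bosonic_amari_chentsov_component_neg
    (k κ a μ T : ℝ) (hk : 0 < k) (hκ : 0 < κ) (ha : 1 / 2 ≤ a)
    (hμ : μ < 0) (hT : 0 < T)
    (ξ : ℝ) (hξ : ξ = Real.exp (μ / (k * T)))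
    (Li : ℝ → ℝ → ℝ)
    (hLi : ∀ b x : ℝ, Li b x = ∑' n : ℕ, x ^ (n + 1) / ((n : ℝ) + 1) ^ b)
    (C : ℝ)
    (hC : C = κ * k ^ (a - 1) * T ^ (a - 4) * Real.Gamma (a + 1) *
      (μ ^ 3 * Li (a - 1) ξ +
        a * k * T * ((a + 1) * k * T *
          (3 * μ * Li (a + 1) ξ - (a + 2) * k * T * Li (a + 2) ξ) -
          3 * μ ^ 2 * Li a ξ))) :
    C < 0 := by
  have hkT : 0 < k * T := mul_pos hk hT
  have hL : μ / (k * T) < 0 := div_neg_of_neg_of_pos hμ hkT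
  have hξ0 : 0 < ξ := by rw [hξ]; exact Real.exp_pos _
  have hξ1 : ξ < 1 := by rw [hξ]; exact Real.exp_lt_one_iff.mpr hL
  have ha0 : 0 < a := lt_of_lt_of_le (by norm_num) ha
  -- the series
  set f : ℝ → ℕ → ℝ := fun b n => ξ ^ (n + 1) / ((n : ℝ) + 1) ^ b with hf
  have hfpos : ∀ (b : ℝ) (n : ℕ), 0 < f b n := by
    intro b n
    have h1 : (0:ℝ) < (n : ℝ) + 1 := by positivity
    exact div_pos (pow_pos hξ0 _) (Real.rpow_pos_of_pos h1 _)
  have hLif : ∀ b : ℝ, Li b ξ = ∑' n, f b n := fun b => by rw [hLi]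
  have hsum : ∀ b : ℝ, Summable (f b) := by
    intro b
    have hm : -b ≤ (⌈|b|⌉₊ : ℝ) := le_trans (neg_le_abs b) (Nat.le_ceil _)
    set m := ⌈|b|⌉₊ with hmdef
    have hbig : Summable (fun n : ℕ => ((n : ℝ) + 1) ^ m * ξ ^ (n + 1)) := by
      have h0 : Summable (fun n : ℕ => (n : ℝ) ^ m * ξ ^ n) :=
        summable_pow_mul_geometric_of_norm_lt_one m
          (by rw [Real.norm_eq_abs, abs_of_pos hξ0]; exact hξ1)
      have h1 := (summable_nat_add_iff 1).2 h0
      refine h1.congr fun n => ?_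
      push_cast
      ring
    refine Summable.of_nonneg_of_le (fun n => (hfpos b n).le) (fun n => ?_) hbig
    have h1 : (1:ℝ) ≤ (n : ℝ) + 1 := by
      have := Nat.cast_nonneg (α := ℝ) n; linarith
    have h2 : ((n : ℝ) + 1) ^ (-b) ≤ ((n : ℝ) + 1) ^ (m : ℝ) :=
      Real.rpow_le_rpow_of_exponent_le h1 hm
    rw [Real.rpow_natCast] at h2
    have hfb : f b n = ξ ^ (n + 1) * ((n : ℝ) + 1) ^ (-b) := by
      show ξ ^ (n + 1) / ((n : ℝ) + 1) ^ b = _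
      rw [Real.rpow_neg (by positivity), div_eq_mul_inv]
    rw [hfb, mul_comm (((n : ℝ) + 1) ^ m) (ξ ^ (n + 1))]
    exact mul_le_mul_of_nonneg_left h2 (pow_nonneg hξ0.le _)
  clear_value f
  clear hf hξ hLi
  -- summability of the pieces
  have s1 : Summable (fun n => μ ^ 3 * f (a - 1) n) := (hsum (a - 1)).mul_left _
  have s2 : Summable (fun n => 3 * μ * f (a + 1) n) := (hsum (a + 1)).mul_left _
  have s3 : Summable (fun n => (a + 2) * k * T * f (a + 2) n) :=
    (hsum (a + 2)).mul_left _
  have s23 : Summable (fun n =>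
      3 * μ * f (a + 1) n - (a + 2) * k * T * f (a + 2) n) := s2.sub s3
  have s23' : Summable (fun n => (a + 1) * k * T *
      (3 * μ * f (a + 1) n - (a + 2) * k * T * f (a + 2) n)) := s23.mul_left _
  have s4 : Summable (fun n => 3 * μ ^ 2 * f a n) := (hsum a).mul_left _
  have sB : Summable (fun n => (a + 1) * k * T *
      (3 * μ * f (a + 1) n - (a + 2) * k * T * f (a + 2) n) -
      3 * μ ^ 2 * f a n) := s23'.sub s4
  have sB' : Summable (fun n => a * k * T * ((a + 1) * k * T *
      (3 * μ * f (a + 1) n - (a + 2) * k * T * f (a + 2) n) -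
      3 * μ ^ 2 * f a n)) := sB.mul_left _
  set g : ℕ → ℝ := fun n => μ ^ 3 * f (a - 1) n +
      a * k * T * ((a + 1) * k * T *
        (3 * μ * f (a + 1) n - (a + 2) * k * T * f (a + 2) n) -
        3 * μ ^ 2 * f a n) with hg
  have hgsum : Summable g := s1.add sB'
  -- the bracket equals the combined series
  have e3 : ∑' n, (3 * μ * f (a + 1) n - (a + 2) * k * T * f (a + 2) n)
      = 3 * μ * (∑' n, f (a + 1) n) - (a + 2) * k * T * (∑' n, f (a + 2) n) := by
    rw [Summable.tsum_sub s2 s3, tsum_mul_left, tsum_mul_left]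
  have e2 : ∑' n, ((a + 1) * k * T *
        (3 * μ * f (a + 1) n - (a + 2) * k * T * f (a + 2) n) -
        3 * μ ^ 2 * f a n)
      = (a + 1) * k * T *
        (∑' n, (3 * μ * f (a + 1) n - (a + 2) * k * T * f (a + 2) n)) -
        3 * μ ^ 2 * (∑' n, f a n) := by
    rw [Summable.tsum_sub s23' s4, tsum_mul_left, tsum_mul_left]
  have e1 : ∑' n, g n = μ ^ 3 * (∑' n, f (a - 1) n) +
      a * k * T * (∑' n, ((a + 1) * k * T *
        (3 * μ * f (a + 1) n - (a + 2) * k * T * f (a + 2) n) -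
        3 * μ ^ 2 * f a n)) := by
    rw [hg, Summable.tsum_add s1 sB', tsum_mul_left, tsum_mul_left]
  have hbracket : μ ^ 3 * Li (a - 1) ξ +
        a * k * T * ((a + 1) * k * T *
          (3 * μ * Li (a + 1) ξ - (a + 2) * k * T * Li (a + 2) ξ) -
          3 * μ ^ 2 * Li a ξ) = ∑' n, g n := by
    rw [hLif, hLif, hLif, hLif, e1, e2, e3]
  have hgneg : ∀ n, g n < 0 := by
    intro n
    have f1 := hfpos (a - 1) n
    have f2 := hfpos (a + 1) n
    have f3 := hfpos (a + 2) n
    have f4 := hfpos a n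
    have hμ2 : 0 < μ ^ 2 := by nlinarith
    have hμ3 : μ ^ 3 < 0 := by nlinarith
    have h1 : μ ^ 3 * f (a - 1) n < 0 :=
      mul_neg_of_neg_of_pos hμ3 f1
    have h2 : 3 * μ * f (a + 1) n - (a + 2) * k * T * f (a + 2) n < 0 := by
      have : 3 * μ * f (a + 1) n < 0 := mul_neg_of_neg_of_pos (by linarith) f2
      have : 0 < (a + 2) * k * T * f (a + 2) n := by positivity
      linarith
    have h3 : (a + 1) * k * T *
        (3 * μ * f (a + 1) n - (a + 2) * k * T * f (a + 2) n) < 0 :=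
      mul_neg_of_pos_of_neg (by positivity) h2
    have h4 : 0 < 3 * μ ^ 2 * f a n := mul_pos (by nlinarith) f4
    have h5 : a * k * T * ((a + 1) * k * T *
        (3 * μ * f (a + 1) n - (a + 2) * k * T * f (a + 2) n) -
        3 * μ ^ 2 * f a n) < 0 :=
      mul_neg_of_pos_of_neg (by positivity) (by linarith)
    rw [hg]
    dsimp only
    linarith
  have htsum_neg : ∑' n, g n < 0 := by
    have hpos : 0 < ∑' n, -g n :=
      Summable.tsum_pos hgsum.neg (fun n => by linarith [hgneg n]) 0 (by linarith [hgneg 0])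
    rw [tsum_neg] at hpos
    linarith
  rw [hC, hbracket]
  have hcoef : 0 < κ * k ^ (a - 1) * T ^ (a - 4) * Real.Gamma (a + 1) := by
    have := Real.Gamma_pos_of_pos (show (0:ℝ) < a + 1 by linarith)
    have := Real.rpow_pos_of_pos hk (a - 1)
    have := Real.rpow_pos_of_pos hT (a - 4)
    positivity
  exact mul_neg_of_pos_of_neg hcoef htsum_neg
end

section
/- (Fermionic rigid ideal gas cools down faster: sign of the Amari–Chentsov component.) Let k > 0, κ > 0, a ≥ 1, μ < 0, T > 0, and set ξ := exp(μ / (k T)) ∈ (0,1) and L_b := ∑_{n=1}^∞ (−1)ⁿ ξⁿ / n^b (the polylogarithm Li_b(−ξ)). Then the fermionic Amari–Chentsov component C := −κ · k^{a−1} · T^{a−4} · Γ(a+1) · ( μ³ · L_{a−1} + a k T · ( (a+1) k T · ( 3 μ · L_{a+1} − (a+2) k T · L_{a+2} ) − 3 μ² · L_a ) ) is strictly negative, where Γ is the real Gamma function. -/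
/-!
Each `L_b` with `b ≥ 0` is an alternating series `-(ξ - ξ²/2^b + ξ³/3^b - ⋯)` whose terms decrease
in absolute value, so `L_b ≤ -(ξ - ξ²/2^b) < 0`. With `μ < 0` every one of the four summands of
the bracket in `C` is then a product of an even number of negative factors, so the bracket is
positive, and so is the prefactor `κ k^(a-1) T^(a-4) Γ(a+1)`.
-/

open Filter Finset

theorem Antitone.tsum_neg_one_pow_mul_pos {f : ℕ → ℝ} (hf : Antitone f)
    (hs : Summable fun n => (-1) ^ n * f n) (h10 : f 1 < f 0) :
    0 < ∑' n, (-1) ^ n * f n := by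
  have h := hf.alternating_series_le_tendsto hs.hasSum.tendsto_sum_nat 1
  simp only [mul_one, sum_range_succ, range_one, sum_singleton, pow_zero, pow_one] at h
  linarith

section PolylogNegArg

variable {ξ b : ℝ}

theorem antitone_pow_succ_div_rpow (hξ₀ : 0 ≤ ξ) (hξ₁ : ξ ≤ 1) (hb : 0 ≤ b) :
    Antitone fun n : ℕ => ξ ^ (n + 1) / ((n : ℝ) + 1) ^ b := by
  intro m n hmn
  refine div_le_div₀ (by positivity) (pow_le_pow_of_le_one hξ₀ hξ₁ (by omega))
    (by positivity) (Real.rpow_le_rpow (by positivity) (by gcongr) hb)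

theorem summable_neg_one_pow_mul_pow_succ_div_rpow (hξ₀ : 0 ≤ ξ) (hξ₁ : ξ < 1) (hb : 0 ≤ b) :
    Summable fun n : ℕ => (-1) ^ n * (ξ ^ (n + 1) / ((n : ℝ) + 1) ^ b) := by
  refine Summable.of_norm_bounded (summable_geometric_of_lt_one hξ₀ hξ₁) fun n => ?_
  have hden : 1 ≤ ((n : ℝ) + 1) ^ b := Real.one_le_rpow (by simp) hb
  rw [norm_mul, norm_pow, norm_neg, norm_one, one_pow, one_mul, Real.norm_eq_abs,
    abs_of_nonneg (by positivity)]
  calc ξ ^ (n + 1) / ((n : ℝ) + 1) ^ b ≤ ξ ^ (n + 1) := div_le_self (by positivity) hden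
    _ ≤ ξ ^ n := pow_le_pow_of_le_one hξ₀ hξ₁.le n.le_succ

theorem tsum_neg_one_pow_succ_mul_pow_succ_div_rpow_neg (hξ₀ : 0 < ξ) (hξ₁ : ξ < 1)
    (hb : 0 ≤ b) :
    ∑' n : ℕ, (-1 : ℝ) ^ (n + 1) * ξ ^ (n + 1) / ((n : ℝ) + 1) ^ b < 0 := by
  have h10 : ξ ^ 2 / 2 ^ b < ξ := by
    rw [div_lt_iff₀ (by positivity)]
    nlinarith [Real.one_le_rpow one_le_two hb]
  have hpos := (antitone_pow_succ_div_rpow hξ₀.le hξ₁.le hb).tsum_neg_one_pow_mul_pos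
    (summable_neg_one_pow_mul_pow_succ_div_rpow hξ₀.le hξ₁ hb) (by norm_num [h10])
  simp only [pow_succ (-1 : ℝ), mul_neg_one, neg_mul, neg_div, tsum_neg, mul_div_assoc]
  linarith

end PolylogNegArg

theorem amari_chentsov_bracket_pos {μ s a l₀ l₁ l₂ l₃ : ℝ} (hμ : μ < 0) (hs : 0 < s)
    (ha : 0 < a) (hl₀ : l₀ < 0) (hl₁ : l₁ < 0) (hl₂ : l₂ < 0) (hl₃ : l₃ < 0) :
    0 < μ ^ 3 * l₀ + a * s * ((a + 1) * s * (3 * μ * l₂ - (a + 2) * s * l₃) - 3 * μ ^ 2 * l₁) := by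
  have h₀ : 0 < μ ^ 3 * l₀ := mul_pos_of_neg_of_neg (Odd.pow_neg (by decide) hμ) hl₀
  have h₁ : 0 < 3 * a * s * μ ^ 2 * -l₁ :=
    mul_pos (mul_pos (by positivity) (sq_pos_of_neg hμ)) (neg_pos.2 hl₁)
  have h₂ : 0 < 3 * a * (a + 1) * s ^ 2 * (μ * l₂) :=
    mul_pos (by positivity) (mul_pos_of_neg_of_neg hμ hl₂)
  have h₃ : 0 < a * (a + 1) * (a + 2) * s ^ 3 * -l₃ := mul_pos (by positivity) (neg_pos.2 hl₃)
  linear_combination h₀ + h₁ + h₂ + h₃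

/-- **Fermionic rigid ideal gas cools down faster.** For an ideal Fermi gas at
negative chemical potential `μ` and positive temperature `T` (away from the quantum
regime), the Amari–Chentsov component `C¹¹¹ = −∂³ψ/∂T³` at constant `μ`, expressed
through the polylogarithms `Li_b(−ξ) = ∑_{n≥1} (−1)ⁿ ξⁿ/n^b` of the fugacity
`ξ = e^{μ/(kT)} ∈ (0,1)`, is strictly negative. -/
theorem fermionic_amari_chentsov_component_neg
    (k κ a μ T : ℝ) (hk : 0 < k) (hκ : 0 < κ) (ha : 1 ≤ a)
    (hμ : μ < 0) (hT : 0 < T)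
    (ξ : ℝ) (hξ : ξ = Real.exp (μ / (k * T)))
    (L : ℝ → ℝ)
    (hL : ∀ b : ℝ, L b = ∑' n : ℕ, (-1 : ℝ) ^ (n + 1) * ξ ^ (n + 1) / ((n : ℝ) + 1) ^ b)
    (C : ℝ)
    (hC : C = -(κ * k ^ (a - 1) * T ^ (a - 4) * Real.Gamma (a + 1) *
      (μ ^ 3 * L (a - 1) +
        a * k * T * ((a + 1) * k * T *
          (3 * μ * L (a + 1) - (a + 2) * k * T * L (a + 2)) -
          3 * μ ^ 2 * L a)))) :
    C < 0 := by
  have hξ₀ : 0 < ξ := hξ ▸ Real.exp_pos _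
  have hξ₁ : ξ < 1 := by
    rw [hξ, Real.exp_lt_one_iff]
    exact div_neg_of_neg_of_pos hμ (by positivity)
  have hL_neg (b : ℝ) (hb : 0 ≤ b) : L b < 0 :=
    hL b ▸ tsum_neg_one_pow_succ_mul_pow_succ_div_rpow_neg hξ₀ hξ₁ hb
  have hprefactor : 0 < κ * k ^ (a - 1) * T ^ (a - 4) * Real.Gamma (a + 1) :=
    mul_pos (by positivity) (Real.Gamma_pos_of_pos (by linarith))
  have hbracket := amari_chentsov_bracket_pos hμ (mul_pos hk hT) (by linarith : 0 < a)
    (hL_neg (a - 1) (by linarith)) (hL_neg a (by linarith)) (hL_neg (a + 1) (by linarith))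
    (hL_neg (a + 2) (by linarith))
  rw [hC, neg_lt_zero]
  refine mul_pos hprefactor ?_
  linear_combination hbracket
end

section
/- (Classical rigid ideal gas cools down faster.) Let k > 0, κ > 0, c > 1, μ < 0, and define U(T) := c κ k T^{c+1} exp(μ/(k T)) and N(T) := κ T^c exp(μ/(k T)) on (0, ∞). Define F(T) := (U'(T) − μ N'(T)) / T (the T-derivative of the entropy at constant μ). Then F is differentiable on (0, ∞) and F'(T) > 0 for every T > 0; equivalently, the Amari–Chentsov component C^{111} = −F'(T) of the classical ideal gas in a rigid container is strictly negative, and it is proportional to −k^{−2} T^{c−5} exp(μ/(kT)) · ( c(c²−1) k³ T³ − 3 μ (c−1) c k² T² + 3 μ² (c−1) k T − μ³ ). -/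
/-!
With `a = μ / k`, the functions `gₚ(t) = t ^ p * exp (a / t)` satisfy
`gₚ' = t ^ (p - 2) * exp (a / t) * (p t - a)`. Hence `(U' - μ N') / T` is the combination
`κ (c (c + 1) k g_{c-1} - 2 c μ g_{c-2} + (μ² / k) g_{c-3})`, whose derivative is
`κ k⁻² T ^ (c - 5) exp (μ / (k T))` times a cubic in `T`; for `μ < 0` and `c > 1` every
coefficient of that cubic is positive.
-/

open Real

lemma rpow_eq_rpow_mul_pow {T : ℝ} (hT : 0 < T) {p q : ℝ} (n : ℕ) (h : p = q + n) :
    T ^ p = T ^ q * T ^ n := by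
  rw [h, rpow_add hT, rpow_natCast]

lemma hasDerivAt_rpow_mul_exp_div (p a : ℝ) {T : ℝ} (hT : 0 < T) :
    HasDerivAt (fun t => t ^ p * exp (a / t)) (T ^ (p - 2) * exp (a / T) * (p * T - a)) T := by
  have hexp : HasDerivAt (fun t => exp (a / t)) (exp (a / T) * (a * -(T ^ 2)⁻¹)) T := by
    simpa only [div_eq_mul_inv] using ((hasDerivAt_inv hT.ne').const_mul a).exp
  refine ((hasDerivAt_rpow_const (Or.inl hT.ne')).mul hexp).congr_deriv ?_
  rw [rpow_eq_rpow_mul_pow hT 1 (by push_cast; ring : p - 1 = p - 2 + (1 : ℕ)),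
    rpow_eq_rpow_mul_pow hT 2 (by push_cast; ring : p = p - 2 + (2 : ℕ))]
  field_simp
  ring

noncomputable def classicalEntropySlope (k κ c μ t : ℝ) : ℝ :=
  κ * (c * (c + 1) * k * (t ^ (c - 1) * exp (μ / k / t))
    - 2 * c * μ * (t ^ (c - 2) * exp (μ / k / t)) + μ ^ 2 / k * (t ^ (c - 3) * exp (μ / k / t)))

lemma classicalEntropySlope_eq {k κ c μ T : ℝ} (hk : k ≠ 0) (hT : 0 < T) :
    (deriv (fun t => c * κ * k * t ^ (c + 1) * exp (μ / (k * t))) T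
      - μ * deriv (fun t => κ * t ^ c * exp (μ / (k * t))) T) / T =
      classicalEntropySlope k κ c μ T := by
  have hU : (fun t => c * κ * k * t ^ (c + 1) * exp (μ / (k * t)))
      = fun t => c * κ * k * (t ^ (c + 1) * exp (μ / k / t)) := by
    simp only [div_div, mul_assoc]
  have hN : (fun t => κ * t ^ c * exp (μ / (k * t)))
      = fun t => κ * (t ^ c * exp (μ / k / t)) := by
    simp only [div_div, mul_assoc]
  rw [hU, hN, ((hasDerivAt_rpow_mul_exp_div (c + 1) (μ / k) hT).const_mul (c * κ * k)).deriv,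
    ((hasDerivAt_rpow_mul_exp_div c (μ / k) hT).const_mul κ).deriv, classicalEntropySlope]
  rw [rpow_eq_rpow_mul_pow hT 2 (by push_cast; ring : c + 1 - 2 = c - 3 + (2 : ℕ)),
    rpow_eq_rpow_mul_pow hT 1 (by push_cast; ring : c - 2 = c - 3 + (1 : ℕ)),
    rpow_eq_rpow_mul_pow hT 2 (by push_cast; ring : c - 1 = c - 3 + (2 : ℕ))]
  field_simp
  ring

lemma hasDerivAt_classicalEntropySlope {k κ c μ T : ℝ} (hk : k ≠ 0) (hT : 0 < T) :
    HasDerivAt (classicalEntropySlope k κ c μ)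
      (κ / k ^ 2 * T ^ (c - 5) * exp (μ / (k * T)) *
        (c * (c ^ 2 - 1) * k ^ 3 * T ^ 3 - 3 * μ * (c - 1) * c * k ^ 2 * T ^ 2 +
          3 * μ ^ 2 * (c - 1) * k * T - μ ^ 3)) T := by
  have hg := fun p => hasDerivAt_rpow_mul_exp_div p (μ / k) hT
  refine ((((hg (c - 1)).const_mul (c * (c + 1) * k)).sub ((hg (c - 2)).const_mul (2 * c * μ))).add
    ((hg (c - 3)).const_mul (μ ^ 2 / k))).const_mul κ |>.congr_deriv ?_
  rw [rpow_eq_rpow_mul_pow hT 2 (by push_cast; ring : c - 1 - 2 = c - 5 + (2 : ℕ)),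
    rpow_eq_rpow_mul_pow hT 1 (by push_cast; ring : c - 2 - 2 = c - 5 + (1 : ℕ)),
    show c - 3 - 2 = c - 5 by ring, ← div_div]
  field_simp
  ring

lemma classical_cubic_pos {k c μ T : ℝ} (hk : 0 < k) (hc : 1 < c) (hμ : μ < 0) (hT : 0 < T) :
    0 < c * (c ^ 2 - 1) * k ^ 3 * T ^ 3 - 3 * μ * (c - 1) * c * k ^ 2 * T ^ 2 +
      3 * μ ^ 2 * (c - 1) * k * T - μ ^ 3 := by
  have hc1 : 0 < c - 1 := by linarith
  have hν : 0 < -μ := by linarith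
  have : 0 < c * ((c - 1) * (c + 1)) * k ^ 3 * T ^ 3 + 3 * (-μ) * (c - 1) * c * k ^ 2 * T ^ 2 +
      3 * (-μ) ^ 2 * (c - 1) * k * T + (-μ) ^ 3 := by positivity
  linarith

/-- **Classical rigid ideal gas cools down faster.** For a classical ideal gas in a
rigid container at constant chemical potential `μ < 0`, with `U(T) = cκk T^{c+1} ξ`,
`N(T) = κ T^c ξ` and `F(T) = (U'(T) − μ N'(T))/T` (the `T`-derivative of the entropy),
`F` is differentiable with `F' > 0` on `(0,∞)`; equivalently the Amari–Chentsov
component `C¹¹¹ = −F'` is strictly negative, with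
`F'(T) = (κ/k²) T^{c−5} e^{μ/(kT)} (c(c²−1)k³T³ − 3μ(c−1)ck²T² + 3μ²(c−1)kT − μ³)`. -/
theorem classical_rigid_gas_amari_chentsov_neg
    (k κ c μ : ℝ) (hk : 0 < k) (hκ : 0 < κ) (hc : 1 < c) (hμ : μ < 0)
    (U N F : ℝ → ℝ)
    (hU : ∀ T, U T = c * κ * k * T ^ (c + 1) * Real.exp (μ / (k * T)))
    (hN : ∀ T, N T = κ * T ^ c * Real.exp (μ / (k * T)))
    (hF : ∀ T, F T = (deriv U T - μ * deriv N T) / T) :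
    (∀ T : ℝ, 0 < T → DifferentiableAt ℝ F T) ∧
    (∀ T : ℝ, 0 < T →
      deriv F T = κ / k ^ 2 * T ^ (c - 5) * Real.exp (μ / (k * T)) *
        (c * (c ^ 2 - 1) * k ^ 3 * T ^ 3 - 3 * μ * (c - 1) * c * k ^ 2 * T ^ 2 +
          3 * μ ^ 2 * (c - 1) * k * T - μ ^ 3)) ∧
    (∀ T : ℝ, 0 < T → 0 < deriv F T) ∧
    (∀ T : ℝ, 0 < T → -deriv F T < 0) := by
  obtain rfl : U = _ := funext hU
  obtain rfl : N = _ := funext hN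
  have hFderiv : ∀ T, 0 < T → HasDerivAt F _ T := fun T hT =>
    (hasDerivAt_classicalEntropySlope hk.ne' hT).congr_of_eventuallyEq <| by
      filter_upwards [Ioi_mem_nhds hT] with t ht
      rw [hF, classicalEntropySlope_eq hk.ne' ht]
  have hpos : ∀ T, 0 < T → 0 < deriv F T := fun T hT => by
    rw [(hFderiv T hT).deriv]
    have := classical_cubic_pos hk hc hμ hT
    positivity
  exact ⟨fun T hT => (hFderiv T hT).differentiableAt, fun T hT => (hFderiv T hT).deriv, hpos,
    fun T hT => neg_neg_iff_pos.mpr (hpos T hT)⟩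
end
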